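/- Let N = Z^5 with standard basis e_1, …, e_5 and set e_6 = e_1 + e_2 + 2e_3 - e_4 - e_5. Then the cone σ spanned by e_1, …, e_6 in N ⊗ R is a 5-dimensional cone, the relation e_1 + e_2 + 2e_3 = e_4 + e_5 + e_6 holds, and the two subdivisions of σ obtained by coning over the faces containing {e_1, e_2, e_3} (respectively {e_4, e_5, e_6}) give two different fans with the same support σ. -/

import Mathlib

/-!
Any `x` in `σ` is `∑ cᵢ eᵢ` with `cᵢ ≥ 0`. Subtracting the multiple `t · (relation)` with
`t = min_{rⱼ > 0} cⱼ / rⱼ` keeps all coefficients nonnegative and kills the one where the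
minimum is attained, so `x` lies in a cone omitting some `eⱼ` with `rⱼ > 0`; applied to the
relation and to its negative this shows both subdivisions cover `σ`. They differ because
`e₁` lies in the cones of the first subdivision but not in the cone spanned by `e₂, …, e₆`,
which sits in the half-space `x₁ ≤ x₂`.
-/

open Finset

section ConeSubdivision

variable {ι M : Type*} [AddCommGroup M] [Module ℝ M] (v : ι → M)

lemma span_nnreal_image_diff_le (j : ι) :
    Submodule.span NNReal (v '' (Set.univ \ {j})) ≤ Submodule.span NNReal (Set.range v) :=
  Submodule.span_mono (Set.image_subset_range _ _)

lemma span_nnreal_image_diff_ne {i j : ι}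
    (hj : v j ∉ Submodule.span NNReal (v '' (Set.univ \ {j}))) (hij : i ≠ j) :
    Submodule.span NNReal (v '' (Set.univ \ {i})) ≠
      Submodule.span NNReal (v '' (Set.univ \ {j})) :=
  fun h => hj (h ▸ Submodule.subset_span ⟨j, ⟨trivial, hij.symm⟩, rfl⟩)

variable [Fintype ι]

lemma exists_nonneg_coeffs_of_mem_span_nnreal {x : M}
    (hx : x ∈ Submodule.span NNReal (Set.range v)) :
    ∃ c : ι → ℝ, (∀ i, 0 ≤ c i) ∧ ∑ i, c i • v i = x := by
  obtain ⟨c, rfl⟩ := (Submodule.mem_span_range_iff_exists_fun NNReal).1 hx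
  exact ⟨fun i => c i, fun i => (c i).coe_nonneg, by simp only [NNReal.smul_def]⟩

lemma sum_smul_mem_span_nnreal_image_diff {d : ι → ℝ} (hd : ∀ i, 0 ≤ d i) {j : ι}
    (hdj : d j = 0) :
    ∑ i, d i • v i ∈ Submodule.span NNReal (v '' (Set.univ \ {j})) := by
  refine Submodule.sum_mem _ fun i _ => ?_
  by_cases hij : i = j
  · simp [hij, hdj]
  · have hvi : v i ∈ v '' (Set.univ \ {j}) := ⟨i, ⟨trivial, hij⟩, rfl⟩
    exact Submodule.smul_mem _ (⟨d i, hd i⟩ : NNReal) (Submodule.subset_span hvi)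

theorem exists_mem_span_nnreal_image_diff_of_sum_smul_eq_zero {r : ι → ℝ}
    (hr : ∑ i, r i • v i = 0) (hpos : ∃ j, 0 < r j) {x : M}
    (hx : x ∈ Submodule.span NNReal (Set.range v)) :
    ∃ j, 0 < r j ∧ x ∈ Submodule.span NNReal (v '' (Set.univ \ {j})) := by
  classical
  obtain ⟨c, hc, rfl⟩ := exists_nonneg_coeffs_of_mem_span_nnreal v hx
  have hne : (univ.filter fun i => 0 < r i).Nonempty := by simpa [Finset.Nonempty] using hpos
  obtain ⟨j, hj, hmin⟩ := (univ.filter fun i => 0 < r i).exists_min_image (fun i => c i / r i) hne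
  simp only [mem_filter, mem_univ, true_and] at hj hmin
  set t := c j / r j
  have ht : 0 ≤ t := div_nonneg (hc j) hj.le
  have hd : ∀ i, 0 ≤ c i - t * r i := fun i => by
    rcases lt_or_ge 0 (r i) with hri | hri
    · have := hmin i hri
      rw [le_div_iff₀ hri] at this
      linarith
    · linarith [hc i, mul_nonpos_of_nonneg_of_nonpos ht hri]
  have hsum : ∑ i, (c i - t * r i) • v i = ∑ i, c i • v i := by
    simp [sub_smul, mul_smul, Finset.sum_sub_distrib, ← Finset.smul_sum, hr]
  refine ⟨j, hj, hsum ▸ sum_smul_mem_span_nnreal_image_diff v hd ?_⟩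
  simp [t, div_mul_cancel₀ _ hj.ne']

theorem union_span_nnreal_image_diff_eq {r : ι → ℝ} (hr : ∑ i, r i • v i = 0) {a b c : ι}
    (ha : 0 < r a) (hpos : ∀ j, 0 < r j → j = a ∨ j = b ∨ j = c) :
    (Submodule.span NNReal (v '' (Set.univ \ {a})) : Set M) ∪
      Submodule.span NNReal (v '' (Set.univ \ {b})) ∪
      Submodule.span NNReal (v '' (Set.univ \ {c})) = Submodule.span NNReal (Set.range v) := by
  apply Set.Subset.antisymm
  · rintro x ((hx | hx) | hx) <;> exact span_nnreal_image_diff_le v _ hx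
  · intro x hx
    obtain ⟨j, hj, hxj⟩ := exists_mem_span_nnreal_image_diff_of_sum_smul_eq_zero v hr ⟨a, ha⟩ hx
    rcases hpos j hj with rfl | rfl | rfl
    exacts [Or.inl (Or.inl hxj), Or.inl (Or.inr hxj), Or.inr hxj]

end ConeSubdivision

lemma notMem_span_nnreal_of_map_neg {M : Type*} [AddCommGroup M] [Module ℝ M]
    (f : M →ₗ[ℝ] ℝ) {s : Set M} (hs : ∀ y ∈ s, 0 ≤ f y) {x : M} (hx : f x < 0) :
    x ∉ Submodule.span NNReal s := by
  intro hmem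
  have : 0 ≤ f x := by
    clear hx
    induction hmem using Submodule.span_induction with
    | mem y hy => exact hs y hy
    | zero => simp
    | add y z _ _ hy hz => rw [map_add]; exact add_nonneg hy hz
    | smul a y _ hy => rw [NNReal.smul_def, map_smul, smul_eq_mul]; exact mul_nonneg a.2 hy
  exact this.not_gt hx

/-- Let `N = ℤ⁵` with basis `e₁,…,e₅` and `e₆ = e₁ + e₂ + 2e₃ - e₄ - e₅`.  The cone `σ`
spanned by `e₁,…,e₆` is 5-dimensional (its linear span is everything), the relation
`e₁ + e₂ + 2e₃ = e₄ + e₅ + e₆` holds, and the two subdivisions of `σ` obtained by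
coning over the faces containing `{e₁,e₂,e₃}` (resp. `{e₄,e₅,e₆}`) — i.e. with maximal
cones spanned by all `eᵢ` except one of `e₄,e₅,e₆` (resp. one of `e₁,e₂,e₃`) — give two
different fans with the same support `σ`. -/
theorem toric_flip_two_subdivisions_same_support :
    let v : Fin 6 → (Fin 5 → ℝ) := fun j =>
      if h : (j : ℕ) < 5 then Pi.single ⟨j, h⟩ (1 : ℝ)
      else ![1, 1, 2, -1, -1]
    let cone : Fin 6 → Submodule NNReal (Fin 5 → ℝ) := fun j =>
      Submodule.span NNReal (v '' (Set.univ \ {j}))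
    let σ : Submodule NNReal (Fin 5 → ℝ) := Submodule.span NNReal (Set.range v)
    (v 0 + v 1 + (2 : ℝ) • v 2 = v 3 + v 4 + v 5) ∧
    (Submodule.span ℝ (Set.range v) = ⊤) ∧
    ((cone 3 : Set (Fin 5 → ℝ)) ∪ (cone 4 : Set (Fin 5 → ℝ)) ∪ (cone 5 : Set (Fin 5 → ℝ))
        = (σ : Set (Fin 5 → ℝ))) ∧
    ((cone 0 : Set (Fin 5 → ℝ)) ∪ (cone 1 : Set (Fin 5 → ℝ)) ∪ (cone 2 : Set (Fin 5 → ℝ))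
        = (σ : Set (Fin 5 → ℝ))) ∧
    ({cone 3, cone 4, cone 5} : Set (Submodule NNReal (Fin 5 → ℝ))) ≠
      {cone 0, cone 1, cone 2} := by
  intro v cone σ
  have hcone0 : v 0 ∉ cone 0 := by
    let coord (i : Fin 5) : (Fin 5 → ℝ) →ₗ[ℝ] ℝ := LinearMap.proj i
    let f := coord 1 - coord 0
    refine notMem_span_nnreal_of_map_neg f ?_ (by simp [f, coord, v])
    rintro _ ⟨i, hi, rfl⟩
    fin_cases i <;> simp_all [f, coord, v]
  have hrel : v 0 + v 1 + (2 : ℝ) • v 2 = v 3 + v 4 + v 5 := by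
    funext i; fin_cases i <;> simp [v]
  have hcircuit (ε : ℝ) : ∑ i, (ε • ![1, 1, 2, -1, -1, -1] : Fin 6 → ℝ) i • v i = 0 := by
    simp only [Fin.sum_univ_six, Pi.smul_apply, smul_eq_mul, Matrix.cons_val_zero,
      Matrix.cons_val_one, Matrix.cons_val, mul_one, mul_neg]
    linear_combination (norm := module) ε • hrel
  refine ⟨hrel, ?_, ?_, ?_, fun heq => ?_⟩
  · rw [eq_top_iff, ← (Pi.basisFun ℝ (Fin 5)).span_eq]
    refine Submodule.span_mono ?_
    rintro _ ⟨i, rfl⟩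
    exact ⟨i.castSucc, by simp [v]⟩
  · refine union_span_nnreal_image_diff_eq v (hcircuit (-1)) (by simp) fun j => ?_
    fin_cases j <;> norm_num [Fin.ext_iff]
  · refine union_span_nnreal_image_diff_eq v (hcircuit 1) (by simp) fun j => ?_
    fin_cases j <;> norm_num [Fin.ext_iff]
  have hmem : cone 0 ∈ ({cone 3, cone 4, cone 5} : Set _) := heq ▸ Set.mem_insert _ _
  rcases hmem with h | h | h <;> exact span_nnreal_image_diff_ne v hcone0 (by decide) h.symm
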